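/- For every integer k ≥ 1, ‖ Σ_k B Σ_{k−1} B Σ_k ‖ ≤ 1 / ( k² (1 + (k−1) λ_min(B)) ). -/

import Mathlib

open MeasureTheory Matrix Filter

/-- Posterior covariance `Σ_k = (I + kB)⁻¹` in the Gaussian location model. -/
noncomputable def Sig {p : ℕ} (B : Matrix (Fin p) (Fin p) ℝ) (k : ℕ) :
    Matrix (Fin p) (Fin p) ℝ :=
  (1 + (k : ℝ) • B)⁻¹

/-- Mean-field covariance `S_k = diag((1 + k B_jj)⁻¹)`. -/
noncomputable def Sdiag {p : ℕ} (B : Matrix (Fin p) (Fin p) ℝ) (k : ℕ) :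
    Matrix (Fin p) (Fin p) ℝ :=
  Matrix.diagonal fun j => (1 + (k : ℝ) * B j j)⁻¹

/-- Spectral norm (L2 operator norm) of a real square matrix. -/
noncomputable def specNorm {p : ℕ} (M : Matrix (Fin p) (Fin p) ℝ) : ℝ :=
  ‖(Matrix.toEuclideanCLM (𝕜 := ℝ) M : EuclideanSpace ℝ (Fin p) →L[ℝ] EuclideanSpace ℝ (Fin p))‖

/-!
Diagonalize `B = U diag(λ) Uᴴ` with `U` unitary. Every `Σ_m` is then `U diag((1 + mλ)⁻¹) Uᴴ`, so
the product is unitarily similar to the diagonal matrix with entries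
`λ² / ((1 + kλ)² (1 + (k-1)λ))`, and its spectral norm is the largest of them. Each is at most
`k⁻² (1 + (k-1)λ_min)⁻¹`, because `λ / (1 + kλ) ≤ 1/k` and `λ ≥ λ_min`.
-/

open scoped Matrix.Norms.L2Operator

lemma specNorm_eq_norm {p : ℕ} (M : Matrix (Fin p) (Fin p) ℝ) : specNorm M = ‖M‖ := rfl

lemma Unitary.norm_conjStarAlgAut {S E : Type*} [NormedRing E] [StarRing E] [CStarRing E]
    [SMul S E] [IsScalarTower S E E] [SMulCommClass S E E] (U : unitary E) (x : E) :
    ‖Unitary.conjStarAlgAut S E U x‖ = ‖x‖ := by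
  rw [Unitary.conjStarAlgAut_apply, ← Unitary.coe_star, CStarRing.norm_mul_coe_unitary,
    CStarRing.norm_coe_unitary_mul]

namespace Matrix

variable {n K : Type*} [Fintype n] [DecidableEq n] [Field K] [StarRing K]

lemma conjStarAlgAut_diagonal_inv (U : unitaryGroup n K) {d : n → K} (hd : ∀ i, d i ≠ 0) :
    (Unitary.conjStarAlgAut K _ U (diagonal d))⁻¹ =
      Unitary.conjStarAlgAut K _ U (diagonal d⁻¹) := by
  refine inv_eq_left_inv ?_
  rw [← map_mul, diagonal_mul_diagonal, ← map_one (Unitary.conjStarAlgAut K _ U), ← diagonal_one]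
  congr 2
  ext i
  exact inv_mul_cancel₀ (hd i)

variable {A : Matrix n n ℝ}

lemma IsHermitian.eq_conjStarAlgAut_diagonal (hA : A.IsHermitian) :
    A = Unitary.conjStarAlgAut ℝ _ hA.eigenvectorUnitary (diagonal hA.eigenvalues) := by
  simpa using hA.spectral_theorem

lemma IsHermitian.one_add_smul_eq_conjStarAlgAut (hA : A.IsHermitian) (c : ℝ) :
    1 + c • A = Unitary.conjStarAlgAut ℝ _ hA.eigenvectorUnitary
      (diagonal fun i => 1 + c * hA.eigenvalues i) := by
  conv_lhs => rw [hA.eq_conjStarAlgAut_diagonal]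
  rw [← map_smul, ← map_one (Unitary.conjStarAlgAut ℝ _ hA.eigenvectorUnitary), ← map_add,
    ← diagonal_one, ← diagonal_smul, ← diagonal_add]
  rfl

end Matrix

lemma abs_inv_mul_mul_inv_mul_mul_inv_le {k μ x : ℝ} (hk : 1 ≤ k) (hμ : 0 ≤ μ) (hμx : μ ≤ x) :
    |(1 + k * x)⁻¹ * x * (1 + (k - 1) * x)⁻¹ * x * (1 + k * x)⁻¹| ≤
      1 / (k ^ 2 * (1 + (k - 1) * μ)) := by
  have hx : 0 ≤ x := hμ.trans hμx
  have hk₀ : 0 ≤ k - 1 := by linarith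
  have hkx : x * (1 + k * x)⁻¹ ≤ k⁻¹ := by
    rw [← div_eq_mul_inv, div_le_iff₀ (by positivity)]
    field_simp
    linarith
  calc |(1 + k * x)⁻¹ * x * (1 + (k - 1) * x)⁻¹ * x * (1 + k * x)⁻¹|
      = (x * (1 + k * x)⁻¹) ^ 2 * (1 + (k - 1) * x)⁻¹ := by
        rw [abs_of_nonneg (by positivity)]
        ring
    _ ≤ k⁻¹ ^ 2 * (1 + (k - 1) * μ)⁻¹ := by gcongr
    _ = 1 / (k ^ 2 * (1 + (k - 1) * μ)) := by field_simp

theorem stmt_10_general (p : ℕ) (B : Matrix (Fin p) (Fin p) ℝ) (hB : B.PosDef)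
    (k : ℕ) (hk : 1 ≤ k) :
    specNorm (Sig B k * B * Sig B (k - 1) * B * Sig B k) ≤
      1 / ((k : ℝ) ^ 2 * (1 + ((k : ℝ) - 1) * ⨅ i, hB.isHermitian.eigenvalues i)) := by
  set e := hB.isHermitian.eigenvalues
  set φ := Unitary.conjStarAlgAut ℝ _ hB.isHermitian.eigenvectorUnitary
  have hSig (m : ℕ) : Sig B m = φ (diagonal fun i => (1 + m * e i)⁻¹) := by
    rw [Sig, hB.isHermitian.one_add_smul_eq_conjStarAlgAut, conjStarAlgAut_diagonal_inv]
    · rfl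
    · intro i
      have := hB.eigenvalues_pos i
      positivity
  have hμ : 0 ≤ ⨅ i, e i := Real.iInf_nonneg fun i => (hB.eigenvalues_pos i).le
  have hk' : (1 : ℝ) ≤ k := by exact_mod_cast hk
  have hbound (i) :=
    abs_inv_mul_mul_inv_mul_mul_inv_le hk' hμ (ciInf_le (Finite.bddBelow_range e) i)
  rw [specNorm_eq_norm, hSig, hSig, hB.isHermitian.eq_conjStarAlgAut_diagonal,
    ← map_mul, ← map_mul, ← map_mul, ← map_mul]
  simp only [diagonal_mul_diagonal]
  rw [Unitary.norm_conjStarAlgAut, l2_opNorm_diagonal,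
    pi_norm_le_iff_of_nonneg (div_nonneg zero_le_one (mul_nonneg (sq_nonneg _) (by nlinarith)))]
  intro i
  rw [Real.norm_eq_abs, Nat.cast_pred hk]
  exact hbound i

/-- For every `k ≥ 1`, `‖Σ_k B Σ_{k-1} B Σ_k‖ ≤ 1/(k² (1 + (k-1) λ_min(B)))` in spectral norm. -/
theorem stmt_10 (p : ℕ) (hp : 1 ≤ p) (B : Matrix (Fin p) (Fin p) ℝ) (hB : B.PosDef)
    (k : ℕ) (hk : 1 ≤ k) :
    specNorm (Sig B k * B * Sig B (k - 1) * B * Sig B k) ≤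
      1 / ((k : ℝ) ^ 2 * (1 + ((k : ℝ) - 1) * ⨅ i, hB.isHermitian.eigenvalues i)) :=
  stmt_10_general p B hB k hk
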